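/- arXiv:math/9910058 — 2 statements merged into one kernel-verified Lean document; each statement's English description precedes it below -/
import Mathlib

section
/- If M is a skew-symmetric 6×6 complex matrix of rank 4, then the quadratic Pfaffians of M are exactly the Plücker coordinates of the 2-dimensional kernel of M; that is, Pf₂(M) is a nonzero decomposable bivector ν ∈ ∧² ker(M). -/
open Matrix

/-- The quadratic Pfaffian `c_{ij}` of a 6×6 skew-symmetric matrix `M`, for `i < j`:
`c_{ij} = (-1)^(i+j+1) (a_{pq} a_{rs} - a_{pr} a_{qs} + a_{ps} a_{qr})`,
where `p < q < r < s` is the increasing enumeration of the complement of `{i,j}`. -/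
noncomputable def qpf (M : Matrix (Fin 6) (Fin 6) ℂ) (i j : Fin 6) : ℂ :=
  if hij : i < j then
    have hne : i ≠ j := ne_of_lt hij
    have h2 : ({i, j} : Finset (Fin 6)).card = 2 := by
      rw [Finset.card_insert_of_notMem (by simpa using hne), Finset.card_singleton]
    have hcard : ({i, j}ᶜ : Finset (Fin 6)).card = 4 := by
      rw [Finset.card_compl, h2]; rfl
    let e := ({i, j}ᶜ : Finset (Fin 6)).orderEmbOfFin hcard
    (-1 : ℂ) ^ (i.val + j.val + 1) *
      (M (e 0) (e 1) * M (e 2) (e 3) - M (e 0) (e 2) * M (e 1) (e 3) +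
        M (e 0) (e 3) * M (e 1) (e 2))
  else 0

/-- The quadratic Pfaffian map `Pf₂`, sending a skew-symmetric 6×6 matrix `M`
(identified with the 2-form `∑ a_{ij} εᵢ∧εⱼ`) to the skew-symmetric matrix of its
15 quadratic Pfaffians (identified with the bivector `(1/(2!·4!)) (M∧M) ⌟ e₁∧…∧e₆`). -/
noncomputable def pf2 (M : Matrix (Fin 6) (Fin 6) ℂ) : Matrix (Fin 6) (Fin 6) ℂ :=
  Matrix.of fun i j =>
    if i < j then qpf M i j else if j < i then -qpf M j i else 0

lemma qpf_eval (M : Matrix (Fin 6) (Fin 6) ℂ) (i j : Fin 6) (hij : i < j) (p q r s : Fin 6)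
    (h : ∀ (hc : ({i,j}ᶜ : Finset (Fin 6)).card = 4),
      (({i,j}ᶜ : Finset (Fin 6)).orderEmbOfFin hc : Fin 4 → Fin 6) = ![p,q,r,s]) :
    qpf M i j = (-1:ℂ)^(i.val+j.val+1) * (M p q * M r s - M p r * M q s + M p s * M q r) := by
  rw [qpf, dif_pos hij]
  have hc : ({i, j}ᶜ : Finset (Fin 6)).card = 4 := by
    rw [Finset.card_compl,
      Finset.card_insert_of_notMem (by simpa using ne_of_lt hij), Finset.card_singleton]
    rfl
  have := h hc
  simp only [show ∀ (x : Fin 4), (({i,j}ᶜ : Finset (Fin 6)).orderEmbOfFin hc) x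
    = ![p,q,r,s] x from fun x => by rw [this]]
  simp

lemma det_skew_four (N : Matrix (Fin 4) (Fin 4) ℂ) (hN : ∀ i j, N j i = -N i j)
    (h0 : ∀ i, N i i = 0) :
    N.det = (N 0 1 * N 2 3 - N 0 2 * N 1 3 + N 0 3 * N 1 2)^2 := by
  rw [Matrix.det_succ_row_zero]
  simp [Fin.sum_univ_succ, Matrix.det_fin_three,
    Matrix.submatrix_apply, Fin.succAbove, h0, hN 0 1, hN 0 2, hN 0 3, hN 1 2, hN 1 3, hN 2 3]
  ring

lemma cols_indep (N : Matrix (Fin 4) (Fin 4) ℂ) (h : N.det ≠ 0) :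
    LinearIndependent ℂ (fun t => fun s => N s t) := by
  rw [Fintype.linearIndependent_iff]
  intro gc hgc t
  by_contra hgt
  apply h
  rw [← Matrix.exists_mulVec_eq_zero_iff]
  refine ⟨gc, fun h0' => hgt (by rw [h0']; rfl), ?_⟩
  funext s
  have := congrFun hgc s
  simpa [Matrix.mulVec, dotProduct, Finset.sum_apply, mul_comm] using this

/-- Plücker-type 3-term relation for a skew matrix whose columns lie in a
2-dimensional subspace. -/
lemma pl_zero_of_ker (P : Matrix (Fin 6) (Fin 6) ℂ) (hP : ∀ i j, P j i = -P i j)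
    (h0P : ∀ i, P i i = 0) (K : Submodule ℂ (Fin 6 → ℂ)) (hK : Module.finrank ℂ K ≤ 2)
    (hcol : ∀ k, (fun i => P i k) ∈ K) (a b i j : Fin 6) :
    P a b * P i j - P a i * P b j + P a j * P b i = 0 := by
  have hdet : (P.submatrix ![a,b,i,j] ![a,b,i,j]).det = 0 := by
    by_contra hd
    have hind := cols_indep _ hd
    have hind2 : LinearIndependent ℂ (fun t => fun x : Fin 6 => P x (![a,b,i,j] t)) := by
      refine LinearIndependent.of_comp (LinearMap.funLeft ℂ ℂ ![a,b,i,j]) ?_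
      have hee : (⇑(LinearMap.funLeft ℂ ℂ ![a,b,i,j]) ∘ fun t (x : Fin 6) => P x (![a,b,i,j] t))
          = (fun t s => P.submatrix ![a,b,i,j] ![a,b,i,j] s t) := by
        funext t s
        simp [LinearMap.funLeft_apply, Matrix.submatrix_apply]
      rw [hee]
      exact hind
    have hfam : LinearIndependent ℂ (fun t : Fin 4 =>
        (⟨fun x : Fin 6 => P x (![a,b,i,j] t), hcol (![a,b,i,j] t)⟩ : K)) := by
      refine LinearIndependent.of_comp K.subtype ?_
      exact hind2
    have hcard := hfam.fintype_card_le_finrank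
    simp only [Fintype.card_fin] at hcard
    omega
  have h4 := det_skew_four (P.submatrix ![a,b,i,j] ![a,b,i,j])
    (fun x y => hP (![a,b,i,j] x) (![a,b,i,j] y)) (fun x => h0P (![a,b,i,j] x))
  rw [hdet] at h4
  have h5 : (P a b * P i j - P a i * P b j + P a j * P b i)^2 = 0 := by
    have := h4.symm
    simpa [Matrix.submatrix_apply] using this
  exact pow_eq_zero_iff (by norm_num) |>.mp h5

/-- Plücker-type relation for a skew matrix all of whose quadratic Pfaffians vanish,
at pairwise distinct indices. -/
lemma pl_zero (M : Matrix (Fin 6) (Fin 6) ℂ) (hM : ∀ i j : Fin 6, M j i = -M i j)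
    (h0 : ∀ i : Fin 6, M i i = 0) (hq : ∀ i j : Fin 6, i < j → qpf M i j = 0)
    (a b i j : Fin 6) (hab : a ≠ b) (hai : a ≠ i) (haj : a ≠ j) (hbi : b ≠ i) (hbj : b ≠ j)
    (hij : i ≠ j) :
    M a b * M i j - M a i * M b j + M a j * M b i = 0 := by
  set Q : Finset (Fin 6) := {a, b, i, j} with hQdef
  have hQ : Q.card = 4 := by
    rw [hQdef, Finset.card_insert_of_notMem (by simp [hab, hai, haj]),
      Finset.card_insert_of_notMem (by simp [hbi, hbj]),
      Finset.card_insert_of_notMem (by simp [hij]), Finset.card_singleton]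
  have hcc : Qᶜ.card = 2 := by rw [Finset.card_compl, hQ]; rfl
  set e := Q.orderEmbOfFin hQ with hedef
  set i0 := Qᶜ.orderEmbOfFin hcc 0 with hi0
  set j0 := Qᶜ.orderEmbOfFin hcc 1 with hj0
  have hi0j0 : i0 < j0 := (Qᶜ.orderEmbOfFin hcc).strictMono (by norm_num)
  have hset : ({i0, j0} : Finset (Fin 6)) = Qᶜ := by
    refine Finset.eq_of_subset_of_card_le ?_ ?_
    · intro x hx
      rcases Finset.mem_insert.mp hx with h | h
      · rw [h]; exact Finset.orderEmbOfFin_mem _ hcc 0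
      · rw [Finset.mem_singleton.mp h]; exact Finset.orderEmbOfFin_mem _ hcc 1
    · rw [hcc, Finset.card_insert_of_notMem (by simp [hi0j0.ne]), Finset.card_singleton]
  have hcomp : ({i0, j0}ᶜ : Finset (Fin 6)) = Q := by rw [hset, compl_compl]
  have hfe : ∀ (hc : ({i0,j0}ᶜ : Finset (Fin 6)).card = 4),
      (({i0,j0}ᶜ : Finset (Fin 6)).orderEmbOfFin hc : Fin 4 → Fin 6)
        = ![e 0, e 1, e 2, e 3] := by
    intro hc
    refine (Finset.orderEmbOfFin_unique hc ?_ ?_).symm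
    · intro x; rw [hcomp]; fin_cases x <;> exact Finset.orderEmbOfFin_mem Q hQ _
    · have heq : (![e 0, e 1, e 2, e 3] : Fin 4 → Fin 6) = ⇑(Q.orderEmbOfFin hQ) := by
        funext x; fin_cases x <;> rfl
      rw [heq]; exact (Q.orderEmbOfFin hQ).strictMono
  have hq0 := hq i0 j0 hi0j0
  rw [qpf_eval M i0 j0 hi0j0 (e 0) (e 1) (e 2) (e 3) hfe] at hq0
  have hplz : M (e 0) (e 1) * M (e 2) (e 3) - M (e 0) (e 2) * M (e 1) (e 3) +
      M (e 0) (e 3) * M (e 1) (e 2) = 0 :=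
    (mul_eq_zero.mp hq0).resolve_left (pow_ne_zero _ (by norm_num))
  have hdet_e : (M.submatrix (⇑e) (⇑e)).det = 0 := by
    rw [det_skew_four (M.submatrix (⇑e) (⇑e)) (fun x y => hM (e x) (e y)) (fun x => h0 (e x))]
    simp only [Matrix.submatrix_apply]
    rw [hplz]
    norm_num
  -- transport along a permutation
  have hmemQ : ∀ t : Fin 4, (![a,b,i,j] : Fin 4 → Fin 6) t ∈ Q := by
    intro t; fin_cases t <;> simp [hQdef]
  set σ : Fin 4 → Fin 4 := fun t => (Q.orderIsoOfFin hQ).symm ⟨![a,b,i,j] t, hmemQ t⟩ with hσdef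
  have heσ : ∀ t, e (σ t) = ![a,b,i,j] t := by
    intro t
    rw [hedef, ← Finset.coe_orderIsoOfFin_apply Q hQ (σ t), hσdef]
    simp
  have hginj : Function.Injective (![a,b,i,j] : Fin 4 → Fin 6) := by
    intro x y hxy
    fin_cases x <;> fin_cases y <;>
      first
        | rfl
        | (exfalso; revert hxy;
           simp [hab, hai, haj, hbi, hbj, hij, hab.symm, hai.symm, haj.symm, hbi.symm,
             hbj.symm, hij.symm])
  have hσinj : Function.Injective σ := fun x y h => hginj (by rw [← heσ, ← heσ, h])
  set σe : Fin 4 ≃ Fin 4 := Equiv.ofBijective σ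
    ((Fintype.bijective_iff_injective_and_card σ).mpr ⟨hσinj, rfl⟩) with hσe
  have hsub : M.submatrix ![a,b,i,j] ![a,b,i,j] = (M.submatrix (⇑e) (⇑e)).submatrix σe σe := by
    ext x y
    simp only [Matrix.submatrix_apply, hσe, Equiv.ofBijective_apply, heσ]
  have hdet_g : (M.submatrix ![a,b,i,j] ![a,b,i,j]).det = 0 := by
    rw [hsub, Matrix.det_submatrix_equiv_self, hdet_e]
  have h4 := det_skew_four (M.submatrix ![a,b,i,j] ![a,b,i,j])
    (fun x y => hM (![a,b,i,j] x) (![a,b,i,j] y)) (fun x => h0 (![a,b,i,j] x))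
  rw [hdet_g] at h4
  have h5 : (M a b * M i j - M a i * M b j + M a j * M b i)^2 = 0 := by
    have := h4.symm
    simpa [Matrix.submatrix_apply] using this
  exact pow_eq_zero_iff (by norm_num) |>.mp h5
lemma qpf01 (M : Matrix (Fin 6) (Fin 6) ℂ) : qpf M 0 1 = (M 2 3 * M 4 5 - M 2 4 * M 3 5 + M 2 5 * M 3 4) := by
  rw [qpf_eval M 0 1 (by decide) 2 3 4 5
    (fun hc => (Finset.orderEmbOfFin_unique hc (f := ![2,3,4,5]) (by decide) (by decide)).symm)]
  norm_num [show ((0:Fin 6):ℕ)=0 from rfl, show ((1:Fin 6):ℕ)=1 from rfl, show ((2:Fin 6):ℕ)=2 from rfl, show ((3:Fin 6):ℕ)=3 from rfl, show ((4:Fin 6):ℕ)=4 from rfl, show ((5:Fin 6):ℕ)=5 from rfl]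

lemma qpf02 (M : Matrix (Fin 6) (Fin 6) ℂ) : qpf M 0 2 = -(M 1 3 * M 4 5 - M 1 4 * M 3 5 + M 1 5 * M 3 4) := by
  rw [qpf_eval M 0 2 (by decide) 1 3 4 5
    (fun hc => (Finset.orderEmbOfFin_unique hc (f := ![1,3,4,5]) (by decide) (by decide)).symm)]
  norm_num [show ((0:Fin 6):ℕ)=0 from rfl, show ((1:Fin 6):ℕ)=1 from rfl, show ((2:Fin 6):ℕ)=2 from rfl, show ((3:Fin 6):ℕ)=3 from rfl, show ((4:Fin 6):ℕ)=4 from rfl, show ((5:Fin 6):ℕ)=5 from rfl]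

lemma qpf03 (M : Matrix (Fin 6) (Fin 6) ℂ) : qpf M 0 3 = (M 1 2 * M 4 5 - M 1 4 * M 2 5 + M 1 5 * M 2 4) := by
  rw [qpf_eval M 0 3 (by decide) 1 2 4 5
    (fun hc => (Finset.orderEmbOfFin_unique hc (f := ![1,2,4,5]) (by decide) (by decide)).symm)]
  norm_num [show ((0:Fin 6):ℕ)=0 from rfl, show ((1:Fin 6):ℕ)=1 from rfl, show ((2:Fin 6):ℕ)=2 from rfl, show ((3:Fin 6):ℕ)=3 from rfl, show ((4:Fin 6):ℕ)=4 from rfl, show ((5:Fin 6):ℕ)=5 from rfl]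

lemma qpf04 (M : Matrix (Fin 6) (Fin 6) ℂ) : qpf M 0 4 = -(M 1 2 * M 3 5 - M 1 3 * M 2 5 + M 1 5 * M 2 3) := by
  rw [qpf_eval M 0 4 (by decide) 1 2 3 5
    (fun hc => (Finset.orderEmbOfFin_unique hc (f := ![1,2,3,5]) (by decide) (by decide)).symm)]
  norm_num [show ((0:Fin 6):ℕ)=0 from rfl, show ((1:Fin 6):ℕ)=1 from rfl, show ((2:Fin 6):ℕ)=2 from rfl, show ((3:Fin 6):ℕ)=3 from rfl, show ((4:Fin 6):ℕ)=4 from rfl, show ((5:Fin 6):ℕ)=5 from rfl]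

lemma qpf05 (M : Matrix (Fin 6) (Fin 6) ℂ) : qpf M 0 5 = (M 1 2 * M 3 4 - M 1 3 * M 2 4 + M 1 4 * M 2 3) := by
  rw [qpf_eval M 0 5 (by decide) 1 2 3 4
    (fun hc => (Finset.orderEmbOfFin_unique hc (f := ![1,2,3,4]) (by decide) (by decide)).symm)]
  norm_num [show ((0:Fin 6):ℕ)=0 from rfl, show ((1:Fin 6):ℕ)=1 from rfl, show ((2:Fin 6):ℕ)=2 from rfl, show ((3:Fin 6):ℕ)=3 from rfl, show ((4:Fin 6):ℕ)=4 from rfl, show ((5:Fin 6):ℕ)=5 from rfl]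

lemma qpf12 (M : Matrix (Fin 6) (Fin 6) ℂ) : qpf M 1 2 = (M 0 3 * M 4 5 - M 0 4 * M 3 5 + M 0 5 * M 3 4) := by
  rw [qpf_eval M 1 2 (by decide) 0 3 4 5
    (fun hc => (Finset.orderEmbOfFin_unique hc (f := ![0,3,4,5]) (by decide) (by decide)).symm)]
  norm_num [show ((0:Fin 6):ℕ)=0 from rfl, show ((1:Fin 6):ℕ)=1 from rfl, show ((2:Fin 6):ℕ)=2 from rfl, show ((3:Fin 6):ℕ)=3 from rfl, show ((4:Fin 6):ℕ)=4 from rfl, show ((5:Fin 6):ℕ)=5 from rfl]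

lemma qpf13 (M : Matrix (Fin 6) (Fin 6) ℂ) : qpf M 1 3 = -(M 0 2 * M 4 5 - M 0 4 * M 2 5 + M 0 5 * M 2 4) := by
  rw [qpf_eval M 1 3 (by decide) 0 2 4 5
    (fun hc => (Finset.orderEmbOfFin_unique hc (f := ![0,2,4,5]) (by decide) (by decide)).symm)]
  norm_num [show ((0:Fin 6):ℕ)=0 from rfl, show ((1:Fin 6):ℕ)=1 from rfl, show ((2:Fin 6):ℕ)=2 from rfl, show ((3:Fin 6):ℕ)=3 from rfl, show ((4:Fin 6):ℕ)=4 from rfl, show ((5:Fin 6):ℕ)=5 from rfl]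

lemma qpf14 (M : Matrix (Fin 6) (Fin 6) ℂ) : qpf M 1 4 = (M 0 2 * M 3 5 - M 0 3 * M 2 5 + M 0 5 * M 2 3) := by
  rw [qpf_eval M 1 4 (by decide) 0 2 3 5
    (fun hc => (Finset.orderEmbOfFin_unique hc (f := ![0,2,3,5]) (by decide) (by decide)).symm)]
  norm_num [show ((0:Fin 6):ℕ)=0 from rfl, show ((1:Fin 6):ℕ)=1 from rfl, show ((2:Fin 6):ℕ)=2 from rfl, show ((3:Fin 6):ℕ)=3 from rfl, show ((4:Fin 6):ℕ)=4 from rfl, show ((5:Fin 6):ℕ)=5 from rfl]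

lemma qpf15 (M : Matrix (Fin 6) (Fin 6) ℂ) : qpf M 1 5 = -(M 0 2 * M 3 4 - M 0 3 * M 2 4 + M 0 4 * M 2 3) := by
  rw [qpf_eval M 1 5 (by decide) 0 2 3 4
    (fun hc => (Finset.orderEmbOfFin_unique hc (f := ![0,2,3,4]) (by decide) (by decide)).symm)]
  norm_num [show ((0:Fin 6):ℕ)=0 from rfl, show ((1:Fin 6):ℕ)=1 from rfl, show ((2:Fin 6):ℕ)=2 from rfl, show ((3:Fin 6):ℕ)=3 from rfl, show ((4:Fin 6):ℕ)=4 from rfl, show ((5:Fin 6):ℕ)=5 from rfl]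

lemma qpf23 (M : Matrix (Fin 6) (Fin 6) ℂ) : qpf M 2 3 = (M 0 1 * M 4 5 - M 0 4 * M 1 5 + M 0 5 * M 1 4) := by
  rw [qpf_eval M 2 3 (by decide) 0 1 4 5
    (fun hc => (Finset.orderEmbOfFin_unique hc (f := ![0,1,4,5]) (by decide) (by decide)).symm)]
  norm_num [show ((0:Fin 6):ℕ)=0 from rfl, show ((1:Fin 6):ℕ)=1 from rfl, show ((2:Fin 6):ℕ)=2 from rfl, show ((3:Fin 6):ℕ)=3 from rfl, show ((4:Fin 6):ℕ)=4 from rfl, show ((5:Fin 6):ℕ)=5 from rfl]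

lemma qpf24 (M : Matrix (Fin 6) (Fin 6) ℂ) : qpf M 2 4 = -(M 0 1 * M 3 5 - M 0 3 * M 1 5 + M 0 5 * M 1 3) := by
  rw [qpf_eval M 2 4 (by decide) 0 1 3 5
    (fun hc => (Finset.orderEmbOfFin_unique hc (f := ![0,1,3,5]) (by decide) (by decide)).symm)]
  norm_num [show ((0:Fin 6):ℕ)=0 from rfl, show ((1:Fin 6):ℕ)=1 from rfl, show ((2:Fin 6):ℕ)=2 from rfl, show ((3:Fin 6):ℕ)=3 from rfl, show ((4:Fin 6):ℕ)=4 from rfl, show ((5:Fin 6):ℕ)=5 from rfl]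

lemma qpf25 (M : Matrix (Fin 6) (Fin 6) ℂ) : qpf M 2 5 = (M 0 1 * M 3 4 - M 0 3 * M 1 4 + M 0 4 * M 1 3) := by
  rw [qpf_eval M 2 5 (by decide) 0 1 3 4
    (fun hc => (Finset.orderEmbOfFin_unique hc (f := ![0,1,3,4]) (by decide) (by decide)).symm)]
  norm_num [show ((0:Fin 6):ℕ)=0 from rfl, show ((1:Fin 6):ℕ)=1 from rfl, show ((2:Fin 6):ℕ)=2 from rfl, show ((3:Fin 6):ℕ)=3 from rfl, show ((4:Fin 6):ℕ)=4 from rfl, show ((5:Fin 6):ℕ)=5 from rfl]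

lemma qpf34 (M : Matrix (Fin 6) (Fin 6) ℂ) : qpf M 3 4 = (M 0 1 * M 2 5 - M 0 2 * M 1 5 + M 0 5 * M 1 2) := by
  rw [qpf_eval M 3 4 (by decide) 0 1 2 5
    (fun hc => (Finset.orderEmbOfFin_unique hc (f := ![0,1,2,5]) (by decide) (by decide)).symm)]
  norm_num [show ((0:Fin 6):ℕ)=0 from rfl, show ((1:Fin 6):ℕ)=1 from rfl, show ((2:Fin 6):ℕ)=2 from rfl, show ((3:Fin 6):ℕ)=3 from rfl, show ((4:Fin 6):ℕ)=4 from rfl, show ((5:Fin 6):ℕ)=5 from rfl]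

lemma qpf35 (M : Matrix (Fin 6) (Fin 6) ℂ) : qpf M 3 5 = -(M 0 1 * M 2 4 - M 0 2 * M 1 4 + M 0 4 * M 1 2) := by
  rw [qpf_eval M 3 5 (by decide) 0 1 2 4
    (fun hc => (Finset.orderEmbOfFin_unique hc (f := ![0,1,2,4]) (by decide) (by decide)).symm)]
  norm_num [show ((0:Fin 6):ℕ)=0 from rfl, show ((1:Fin 6):ℕ)=1 from rfl, show ((2:Fin 6):ℕ)=2 from rfl, show ((3:Fin 6):ℕ)=3 from rfl, show ((4:Fin 6):ℕ)=4 from rfl, show ((5:Fin 6):ℕ)=5 from rfl]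

lemma qpf45 (M : Matrix (Fin 6) (Fin 6) ℂ) : qpf M 4 5 = (M 0 1 * M 2 3 - M 0 2 * M 1 3 + M 0 3 * M 1 2) := by
  rw [qpf_eval M 4 5 (by decide) 0 1 2 3
    (fun hc => (Finset.orderEmbOfFin_unique hc (f := ![0,1,2,3]) (by decide) (by decide)).symm)]
  norm_num [show ((0:Fin 6):ℕ)=0 from rfl, show ((1:Fin 6):ℕ)=1 from rfl, show ((2:Fin 6):ℕ)=2 from rfl, show ((3:Fin 6):ℕ)=3 from rfl, show ((4:Fin 6):ℕ)=4 from rfl, show ((5:Fin 6):ℕ)=5 from rfl]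

set_option maxHeartbeats 4000000 in
lemma mul_pf2_eq (M : Matrix (Fin 6) (Fin 6) ℂ) (hM : ∀ i j : Fin 6, M j i = -M i j)
    (h0 : ∀ i : Fin 6, M i i = 0) : M * pf2 M = ((M * pf2 M) 0 0) • 1 := by
  ext i k
  fin_cases i <;> fin_cases k <;>
    (simp only [Matrix.mul_apply, Fin.sum_univ_six, pf2, Matrix.of_apply, Matrix.smul_apply,
      Matrix.one_apply, smul_eq_mul]
     simp (config := { decide := true }) [qpf01, qpf02, qpf03, qpf04, qpf05, qpf12, qpf13,
       qpf14, qpf15, qpf23, qpf24, qpf25, qpf34, qpf35, qpf45, h0,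
       hM 0 1, hM 0 2, hM 0 3, hM 0 4, hM 0 5, hM 1 2, hM 1 3, hM 1 4, hM 1 5, hM 2 3, hM 2 4,
       hM 2 5, hM 3 4, hM 3 5, hM 4 5]
     try ring)

theorem pf2_of_rank_four_is_plucker_of_kernel (M : Matrix (Fin 6) (Fin 6) ℂ)
    (hskew : Mᵀ = -M) (hrank : M.rank = 4) :
    ∃ v w : Fin 6 → ℂ, M.mulVec v = 0 ∧ M.mulVec w = 0 ∧ pf2 M ≠ 0 ∧
      ∀ i j : Fin 6, pf2 M i j = v i * w j - v j * w i := by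
  have hM : ∀ i j : Fin 6, M j i = -M i j := fun i j => by
    have h := congrFun (congrFun hskew i) j
    simpa [Matrix.transpose_apply, Matrix.neg_apply] using h
  have h0 : ∀ i : Fin 6, M i i = 0 := fun i => by linear_combination (hM i i) / 2
  have hq2P : ∀ i j : Fin 6, i < j → pf2 M i j = qpf M i j := fun i j h => by
    simp [pf2, h]
  have hPskew : ∀ i j : Fin 6, pf2 M j i = -pf2 M i j := fun i j => by
    rcases lt_trichotomy i j with h | h | h
    · simp [pf2, h, asymm h]
    · subst h; simp [pf2, lt_irrefl]
    · simp [pf2, h, asymm h]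
  have h0P : ∀ i : Fin 6, pf2 M i i = 0 := fun i => by simp [pf2]
  have hMP := mul_pf2_eq M hM h0
  set p := (M * pf2 M) 0 0 with hpdef
  have hp0 : p = 0 := by
    by_contra hp
    have hone : M * (p⁻¹ • pf2 M) = 1 := by
      rw [Matrix.mul_smul, hMP, smul_smul, inv_mul_cancel₀ hp, one_smul]
    have h6 : (6 : ℕ) ≤ 4 := by
      calc (6:ℕ) = (1 : Matrix (Fin 6) (Fin 6) ℂ).rank := by simp
      _ = (M * (p⁻¹ • pf2 M)).rank := by rw [hone]
      _ ≤ M.rank := Matrix.rank_mul_le_left _ _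
      _ = 4 := hrank
    omega
  have hMP0 : M * pf2 M = 0 := by rw [hMP, hp0, zero_smul]
  have hcolker : ∀ k : Fin 6, M.mulVec (fun x => pf2 M x k) = 0 := fun k => by
    funext i
    have := congrFun (congrFun hMP0 i) k
    simpa [Matrix.mul_apply, Matrix.mulVec, dotProduct] using this
  have hKle : Module.finrank ℂ (LinearMap.ker M.mulVecLin) ≤ 2 := by
    have hrn := LinearMap.finrank_range_add_finrank_ker M.mulVecLin
    have h4 : Module.finrank ℂ (LinearMap.range M.mulVecLin) = 4 := hrank
    rw [h4] at hrn
    simp only [Module.finrank_pi, Fintype.card_fin] at hrn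
    omega
  -- nonvanishing of pf2 M
  have hPne : pf2 M ≠ 0 := by
    intro hP0
    have hq0 : ∀ i j : Fin 6, i < j → qpf M i j = 0 := fun i j hij => by
      have := congrFun (congrFun hP0 i) j
      rw [hq2P i j hij] at this
      simpa using this
    obtain ⟨a, b, hMab⟩ : ∃ a b : Fin 6, M a b ≠ 0 := by
      by_contra h
      push_neg at h
      have hz : M = 0 := by ext i j; simpa using h i j
      rw [hz, Matrix.rank_zero] at hrank
      omega
    have hab : a ≠ b := by rintro rfl; exact hMab (h0 a)
    have hrel : ∀ i j : Fin 6, M a b * M i j = M i a * M j b - M j a * M i b := by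
      intro i j
      by_cases hia : i = a
      · subst hia; rw [h0 i, hM i j]; ring
      · by_cases hib : i = b
        · subst hib; rw [h0 i, hM a i, hM j i]; ring
        · by_cases hja : j = a
          · subst hja; rw [h0 j]; ring
          · by_cases hjb : j = b
            · subst hjb; rw [h0 j, hM a j]; ring
            · by_cases hij : i = j
              · subst hij; rw [h0 i]; ring
              · have hplM := pl_zero M hM h0 hq0 a b i j hab
                  (fun h => hia h.symm) (fun h => hja h.symm)
                  (fun h => hib h.symm) (fun h => hjb h.symm) hij
                rw [hM i a, hM j b, hM j a, hM i b] at hplM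
                linear_combination hplM
    set v0 : Fin 6 → ℂ := fun x => M x a with hv0
    set w0 : Fin 6 → ℂ := fun x => M x b with hw0
    have hle : LinearMap.range M.mulVecLin ≤ Submodule.span ℂ (Set.range ![v0, w0]) := by
      rintro y ⟨x, rfl⟩
      have hexp : ∀ i j : Fin 6, M i j = (M a b)⁻¹ * (M i a * M j b - M j a * M i b) := by
        intro i j
        field_simp
        linear_combination hrel i j
      have hy : M.mulVecLin x =
          ((M a b)⁻¹ * (Finset.univ.sum fun t => M t b * x t)) • v0
          + (-(M a b)⁻¹ * (Finset.univ.sum fun t => M t a * x t)) • w0 := by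
        funext i
        simp only [Matrix.mulVecLin_apply, Matrix.mulVec, dotProduct, Pi.add_apply,
          Pi.smul_apply, smul_eq_mul, hv0, hw0, Fin.sum_univ_six]
        rw [hexp i 0, hexp i 1, hexp i 2, hexp i 3, hexp i 4, hexp i 5]
        ring
      rw [hy]
      exact Submodule.add_mem _
        (Submodule.smul_mem _ _ (Submodule.subset_span ⟨0, rfl⟩))
        (Submodule.smul_mem _ _ (Submodule.subset_span ⟨1, rfl⟩))
    have h42 : (4:ℕ) ≤ 2 := by
      calc (4:ℕ) = M.rank := hrank.symm
        _ = Module.finrank ℂ (LinearMap.range M.mulVecLin) := rfl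
        _ ≤ Module.finrank ℂ (Submodule.span ℂ (Set.range ![v0,w0])) :=
            Submodule.finrank_mono hle
        _ ≤ Fintype.card (Fin 2) := finrank_range_le_card ![v0,w0]
        _ = 2 := by simp
    omega
  obtain ⟨a, b, hab0⟩ : ∃ a b : Fin 6, pf2 M a b ≠ 0 := by
    by_contra h
    push_neg at h
    exact hPne (by ext i j; simpa using h i j)
  have hpl := fun i j => pl_zero_of_ker (pf2 M) hPskew h0P (LinearMap.ker M.mulVecLin) hKle
    (fun k => by rw [LinearMap.mem_ker, Matrix.mulVecLin_apply]; exact hcolker k) a b i j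
  refine ⟨(fun x => pf2 M x a), (fun x => (pf2 M a b)⁻¹ * pf2 M x b), hcolker a, ?_, hPne, ?_⟩
  · have heq : (fun x => (pf2 M a b)⁻¹ * pf2 M x b)
        = (pf2 M a b)⁻¹ • (fun x => pf2 M x b) := rfl
    rw [heq, Matrix.mulVec_smul, hcolker b, smul_zero]
  · intro i j
    have key := hpl i j
    rw [hPskew i a, hPskew j b, hPskew j a, hPskew i b] at key
    field_simp
    linear_combination key
end

section
/- For the skew-symmetric matrix M(v,w,x,y,z) defining the Klein cubic (as in the previous item), the 15 quadratic Pfaffians c_{ij} = (-1)^{i+j+1}(a_{pq}a_{rs} - a_{pr}a_{qs} + a_{ps}a_{qr}) (where p<q<r<s and (pqrsij) is a permutation of (123456)) are linearly independent as quadratic forms in v,w,x,y,z. -/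
open Matrix

/-- Adler's skew-symmetric matrix whose Pfaffian is the Klein cubic. -/
def kleinM (v w x y z : ℂ) : Matrix (Fin 6) (Fin 6) ℂ :=
  !![0, v, w, x, y, z;
     -v, 0, 0, z, -x, 0;
     -w, 0, 0, 0, v, -y;
     -x, -z, 0, 0, 0, w;
     -y, x, -v, 0, 0, 0;
     -z, 0, y, -w, 0, 0]
/-!
The quadratic forms in five variables form a space of dimension 15, spanned by the monomials
`aᵢ aⱼ` (`i ≤ j`). Ten of the Pfaffians of the Klein matrix are, up to sign, distinct monomials,
and each of the remaining five is a square plus one of those ten monomials. Hence the 15 Pfaffians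
span the 15-dimensional space of quadratic forms, so they are linearly independent.
-/

open Module Submodule MvPolynomial Set

theorem LinearIndependent.of_span_le_span {K V ι κ : Type*} [DivisionRing K] [AddCommGroup V]
    [Module K V] [Fintype ι] [Fintype κ] {b : κ → V} {v : ι → V} (hb : LinearIndependent K b)
    (hle : span K (range b) ≤ span K (range v)) (hcard : Fintype.card ι ≤ Fintype.card κ) :
    LinearIndependent K v := by
  have := FiniteDimensional.span_of_finite K (finite_range v)
  rw [linearIndependent_iff_card_le_finrank_span]
  calc Fintype.card ι ≤ Fintype.card κ := hcard
    _ = finrank K (span K (range b)) := (finrank_span_eq_card hb).symm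
    _ ≤ (range v).finrank K := Submodule.finrank_mono hle

theorem MvPolynomial.linearIndependent_eval {K σ ι : Type*} [Field K] [Infinite K]
    {P : ι → MvPolynomial σ K} (hP : LinearIndependent K P) :
    LinearIndependent K fun i (a : σ → K) => eval a (P i) := by
  let evalₗ : MvPolynomial σ K →ₗ[K] (σ → K) → K := LinearMap.pi fun a => (aeval a).toLinearMap
  refine hP.map' evalₗ (LinearMap.ker_eq_bot.2 fun p q hpq => MvPolynomial.funext fun a => ?_)
  simpa [evalₗ] using congrFun hpq a

theorem Finsupp.injective_single_add_single {σ : Type*} [LinearOrder σ] :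
    Function.Injective fun p : {p : σ × σ // p.1 ≤ p.2} =>
      single p.1.1 1 + single p.1.2 (1 : ℕ) := by
  rintro ⟨⟨i, j⟩, hij⟩ ⟨⟨k, l⟩, hkl⟩ h
  dsimp only at h hij hkl
  obtain ⟨rfl, rfl⟩ | ⟨-, rfl, rfl⟩ | ⟨h, -⟩ :=
    (single_add_single_eq_single_add_single one_ne_zero one_ne_zero).1 h
  · rfl
  · obtain rfl := le_antisymm hij hkl; rfl
  · exact absurd h (by norm_num)

def quadMonomial (K : Type*) {σ : Type*} [Mul K] (p : σ × σ) (a : σ → K) : K := a p.1 * a p.2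

theorem linearIndependent_quadMonomial (K : Type*) {σ : Type*} [Field K] [Infinite K]
    [LinearOrder σ] :
    LinearIndependent K fun p : {p : σ × σ // p.1 ≤ p.2} => quadMonomial K p.1 := by
  have hmon := (basisMonomials σ K).linearIndependent.comp _ Finsupp.injective_single_add_single
  rw [coe_basisMonomials] at hmon
  convert linearIndependent_eval hmon using 1
  funext p a
  rw [Function.comp_apply, ← one_mul (1 : K), ← monomial_mul, ← X, ← X]
  simp [quadMonomial]

/-- `e` is the increasing enumeration of `{i, j}ᶜ` that `qpf` uses. -/
theorem qpf_eq {i j : Fin 6} (hij : i < j) (M : Matrix (Fin 6) (Fin 6) ℂ) :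
    let e := j.succAbove ∘ (i.castLT (hij.trans_le j.le_last)).succAbove
    qpf M i j = (-1) ^ (i.val + j.val + 1) *
      (M (e 0) (e 1) * M (e 2) (e 3) - M (e 0) (e 2) * M (e 1) (e 3) +
        M (e 0) (e 3) * M (e 1) (e 2)) := by
  intro e
  have hi : j.succAbove (i.castLT (hij.trans_le j.le_last)) = i := by
    rw [Fin.succAbove_of_castSucc_lt _ _ (by simpa using hij), Fin.castSucc_castLT]
  have hmem : ∀ k, e k ∈ ({i, j}ᶜ : Finset (Fin 6)) := fun k => by
    simp only [Finset.mem_compl, Finset.mem_insert, Finset.mem_singleton, not_or]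
    exact ⟨hi ▸ Fin.succAbove_right_injective.ne (Fin.succAbove_ne _ k), Fin.succAbove_ne j _⟩
  have he : StrictMono e := (Fin.strictMono_succAbove j).comp (Fin.strictMono_succAbove _)
  rw [qpf, dif_pos hij]
  dsimp only
  rw [← Finset.orderEmbOfFin_unique _ hmem he]

noncomputable def kleinPfaffian (p : {p : Fin 6 × Fin 6 // p.1 < p.2}) (a : Fin 5 → ℂ) : ℂ :=
  qpf (kleinM (a 0) (a 1) (a 2) (a 3) (a 4)) p.1.1 p.1.2

theorem quadMonomial_mem_span_kleinPfaffian (p : {p : Fin 5 × Fin 5 // p.1 ≤ p.2}) :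
    quadMonomial ℂ p.1 ∈ span ℂ (range kleinPfaffian) := by
  set V := span ℂ (range kleinPfaffian)
  have c (i j : Fin 6) (h : i < j := by decide) : kleinPfaffian ⟨(i, j), h⟩ ∈ V :=
    subset_span ⟨_, rfl⟩
  have of_eq {g} (hg : g ∈ V) (h : quadMonomial ℂ p.1 = g := by
      funext a
      simp [quadMonomial, kleinPfaffian, qpf_eq, kleinM, Fin.succAbove, Fin.lt_def] <;> ring) :
      quadMonomial ℂ p.1 ∈ V :=
    h ▸ hg
  obtain ⟨⟨i, j⟩, hij⟩ := p
  fin_cases i <;> fin_cases j <;> try exact absurd hij (by decide)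
  -- the 15 monomials `aᵢ aⱼ`, `i ≤ j`, in lexicographic order
  exacts [of_eq (sub_mem (c 0 2) (c 3 5)), of_eq (neg_mem (c 0 1)), of_eq (c 1 5),
    of_eq (neg_mem (c 3 4)), of_eq (neg_mem (c 0 5)),
    of_eq (add_mem (c 1 4) (c 0 3)), of_eq (neg_mem (c 0 2)), of_eq (neg_mem (c 1 2)),
    of_eq (neg_mem (c 4 5)),
    of_eq (add_mem (c 2 5) (c 0 4)), of_eq (neg_mem (c 0 3)), of_eq (neg_mem (c 2 3)),
    of_eq (sub_mem (c 0 5) (c 1 3)), of_eq (neg_mem (c 0 4)),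
    of_eq (sub_mem (c 0 1) (c 2 4))]

theorem klein_quadratic_pfaffians_linearly_independent :
    LinearIndependent ℂ
      (fun p : {p : Fin 6 × Fin 6 // p.1 < p.2} =>
        (fun a : Fin 5 → ℂ =>
          qpf (kleinM (a 0) (a 1) (a 2) (a 3) (a 4)) p.1.1 p.1.2)) :=
  (linearIndependent_quadMonomial ℂ).of_span_le_span
    (span_le.2 <| range_subset_iff.2 quadMonomial_mem_span_kleinPfaffian) (by decide)
end
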